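/- arXiv:2102.11166 — 2 statements merged into one kernel-verified Lean document; each statement's English description precedes it below -/
import Mathlib

section
/- The simplified distributivity law (a.x + a.y + u) ‖ c.z ≈ (a.x + u) ‖ c.z + (a.y + u) ‖ c.z is NOT sound for ready simulation equivalence: there exist processes witnessing its failure; concretely, for distinct actions a, b, c, the process (a.0 + a.a.0 + b.0) ‖ c.0 is not ready simulation equivalent to (a.0 + b.0) ‖ c.0 + (a.a.0 + b.0) ‖ c.0. -/
/-!
After its `c`-step the left process becomes `(a + aa + b) ‖ 0`, which has one `a`-derivative
that still offers `a` and one that is stuck. The right process can answer the `c`-step only with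
`(a + b) ‖ 0` or `(aa + b) ‖ 0`, and all `a`-derivatives of either offer the same initial actions,
so a ready simulation cannot match both `a`-steps.
-/

inductive Proc (A : Type) : Type where
  | nil : Proc A
  | pre : A → Proc A → Proc A
  | add : Proc A → Proc A → Proc A
  | par : Proc A → Proc A → Proc A

inductive Step {A : Type} : Proc A → A → Proc A → Prop where
  | pre (a : A) (p : Proc A) : Step (.pre a p) a p
  | addL {p : Proc A} {a : A} {p' : Proc A} (q : Proc A) :
      Step p a p' → Step (.add p q) a p'
  | addR {q : Proc A} {a : A} {q' : Proc A} (p : Proc A) :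
      Step q a q' → Step (.add p q) a q'
  | parL {p : Proc A} {a : A} {p' : Proc A} (q : Proc A) :
      Step p a p' → Step (.par p q) a (.par p' q)
  | parR {q : Proc A} {a : A} {q' : Proc A} (p : Proc A) :
      Step q a q' → Step (.par p q) a (.par p q')

inductive TraceTo {A : Type} : Proc A → List A → Proc A → Prop where
  | refl (p : Proc A) : TraceTo p [] p
  | step {p : Proc A} {a : A} {p' : Proc A} {α : List A} {q : Proc A} :
      Step p a p' → TraceTo p' α q → TraceTo p (a :: α) q

def traces {A : Type} (p : Proc A) : Set (List A) := {α | ∃ q, TraceTo p α q}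

def stuck {A : Type} (p : Proc A) : Prop := ∀ (a : A) (q : Proc A), ¬ Step p a q

def ctraces {A : Type} (p : Proc A) : Set (List A) :=
  {α | ∃ q, TraceTo p α q ∧ stuck q}

def initials {A : Type} (p : Proc A) : Set A := {a | ∃ p', Step p a p'}

def IsSimulation {A : Type} (R : Proc A → Proc A → Prop) : Prop :=
  ∀ p q, R p q → ∀ (a : A) (p' : Proc A), Step p a p' → ∃ q', Step q a q' ∧ R p' q'

def SimEquiv {A : Type} (p q : Proc A) : Prop :=
  (∃ R, IsSimulation R ∧ R p q) ∧ (∃ R, IsSimulation R ∧ R q p)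

def IsReadySimulation {A : Type} (R : Proc A → Proc A → Prop) : Prop :=
  IsSimulation R ∧ ∀ p q, R p q → initials p = initials q

def RSEquiv {A : Type} (p q : Proc A) : Prop :=
  (∃ R, IsReadySimulation R ∧ R p q) ∧ (∃ R, IsReadySimulation R ∧ R q p)

def IsCompletedSimulation {A : Type} (R : Proc A → Proc A → Prop) : Prop :=
  IsSimulation R ∧ ∀ p q, R p q → stuck p → stuck q

def CSEquiv {A : Type} (p q : Proc A) : Prop :=
  (∃ R, IsCompletedSimulation R ∧ R p q) ∧ (∃ R, IsCompletedSimulation R ∧ R q p)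

def Bisim {A : Type} (p q : Proc A) : Prop :=
  ∃ R, (∀ x y, R x y → R y x) ∧ IsSimulation R ∧ R p q

noncomputable def depth {A : Type} (p : Proc A) : ℕ :=
  sSup (List.length '' ctraces p)

noncomputable def norm {A : Type} (p : Proc A) : ℕ :=
  sInf (List.length '' ctraces p)

namespace Step

variable {A : Type} {a b : A} {p q r : Proc A}

@[simp]
theorem not_nil : ¬ Step (.nil : Proc A) a p := nofun

@[simp]
theorem pre_iff : Step (.pre b p) a q ↔ a = b ∧ q = p := by
  constructor
  · rintro ⟨⟩; exact ⟨rfl, rfl⟩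
  · rintro ⟨rfl, rfl⟩; exact .pre _ _

@[simp]
theorem add_iff : Step (.add p q) a r ↔ Step p a r ∨ Step q a r := by
  constructor
  · intro h
    cases h with
    | addL _ h => exact .inl h
    | addR _ h => exact .inr h
  · rintro (h | h)
    exacts [.addL q h, .addR p h]

@[simp]
theorem par_iff :
    Step (.par p q) a r ↔ (∃ p', Step p a p' ∧ r = .par p' q) ∨ (∃ q', Step q a q' ∧ r = .par p q') := by
  constructor
  · intro h
    cases h with
    | parL _ h => exact .inl ⟨_, h, rfl⟩
    | parR _ h => exact .inr ⟨_, h, rfl⟩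
  · rintro (⟨p', h, rfl⟩ | ⟨q', h, rfl⟩)
    exacts [.parL q h, .parR p h]

end Step

section initials

variable {A : Type} (a : A) (p q : Proc A)

@[simp]
theorem initials_nil : initials (.nil : Proc A) = ∅ := by
  ext; simp [initials]

@[simp]
theorem initials_pre : initials (.pre a p) = {a} := by
  ext; simp [initials]

@[simp]
theorem initials_add : initials (.add p q) = initials p ∪ initials q := by
  ext; simp [initials, exists_or]

@[simp]
theorem initials_par : initials (.par p q) = initials p ∪ initials q := by
  ext; simp [initials, exists_or]

end initials

/-- `p` is ready simulated by `q`; `RSEquiv p q` unfolds to `ReadySimLE p q ∧ ReadySimLE q p`. -/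
def ReadySimLE {A : Type} (p q : Proc A) : Prop :=
  ∃ R, IsReadySimulation R ∧ R p q

namespace ReadySimLE

variable {A : Type} {a : A} {p q p' p₁ p₂ : Proc A}

theorem initials_eq (h : ReadySimLE p q) : initials p = initials q := by
  obtain ⟨R, ⟨-, hready⟩, hR⟩ := h
  exact hready p q hR

theorem exists_step (h : ReadySimLE p q) (hp : Step p a p') :
    ∃ q', Step q a q' ∧ ReadySimLE p' q' := by
  obtain ⟨R, hRS, hR⟩ := h
  obtain ⟨q', hq, hR'⟩ := hRS.1 p q hR a p' hp
  exact ⟨q', hq, R, hRS, hR'⟩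

theorem initials_eq_of_steps (h : ReadySimLE p q) {S : Set A}
    (hq : ∀ q', Step q a q' → initials q' = S) (h₁ : Step p a p₁) (h₂ : Step p a p₂) :
    initials p₁ = initials p₂ := by
  obtain ⟨q₁, hq₁, hle₁⟩ := h.exists_step h₁
  obtain ⟨q₂, hq₂, hle₂⟩ := h.exists_step h₂
  rw [hle₁.initials_eq, hle₂.initials_eq, hq q₁ hq₁, hq q₂ hq₂]

end ReadySimLE

theorem simplified_distributivity_not_sound_RS_general {A : Type}
    (a b c : A) (hab : a ≠ b) (hac : a ≠ c) (hbc : b ≠ c) :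
    ¬ RSEquiv
      (Proc.par (Proc.add (Proc.add (Proc.pre a Proc.nil)
                  (Proc.pre a (Proc.pre a Proc.nil))) (Proc.pre b Proc.nil))
                (Proc.pre c Proc.nil))
      (Proc.add
        (Proc.par (Proc.add (Proc.pre a Proc.nil) (Proc.pre b Proc.nil))
                  (Proc.pre c Proc.nil))
        (Proc.par (Proc.add (Proc.pre a (Proc.pre a Proc.nil)) (Proc.pre b Proc.nil))
                  (Proc.pre c Proc.nil))) := by
  rintro ⟨hle, -⟩
  obtain ⟨q, hq, hle'⟩ := ReadySimLE.exists_step hle (.parR _ (.pre c .nil))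
  obtain ⟨S, hS⟩ : ∃ S, ∀ q', Step q a q' → initials q' = S := by
    simp only [Step.add_iff, Step.par_iff, Step.pre_iff, hac.symm, hbc.symm, false_and, or_self,
      exists_false, true_and, exists_eq_left, false_or] at hq
    rcases hq with rfl | rfl
    · exact ⟨∅, by simp [hab]⟩
    · exact ⟨{a}, by simp [hab]⟩
  have hsplit : initials (.par (.pre a .nil) .nil) ≠ initials (.par (.nil : Proc A) .nil) := by
    simp
  exact hsplit <| hle'.initials_eq_of_steps hS
    (.parL _ (.addL _ (.addR _ (.pre a _)))) (.parL _ (.addL _ (.addL _ (.pre a _))))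

theorem simplified_distributivity_not_sound_RS {A : Type} [Fintype A] [Nonempty A]
    (a b c : A) (hab : a ≠ b) (hac : a ≠ c) (hbc : b ≠ c) :
    ¬ RSEquiv
      (Proc.par (Proc.add (Proc.add (Proc.pre a Proc.nil)
                  (Proc.pre a (Proc.pre a Proc.nil))) (Proc.pre b Proc.nil))
                (Proc.pre c Proc.nil))
      (Proc.add
        (Proc.par (Proc.add (Proc.pre a Proc.nil) (Proc.pre b Proc.nil))
                  (Proc.pre c Proc.nil))
        (Proc.par (Proc.add (Proc.pre a (Proc.pre a Proc.nil)) (Proc.pre b Proc.nil))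
                  (Proc.pre c Proc.nil))) :=
  simplified_distributivity_not_sound_RS_general a b c hab hac hbc
end

section
/- The axiom CTP is sound for completed trace equivalence: for all actions a, b and processes x, y, w, z, the processes (a.x + b.y + w) ‖ z and (a.x + w) ‖ z + (b.y + w) ‖ z have the same sets of completed traces (and the same sets of traces). -/
/-! The summand `a.x + b.y + w` has exactly the transitions of `a.x + w` together with those of
`b.y + w`. A run of the parallel composition leaves that summand untouched until it moves out of
it, and this first move commits to one alternative; so every (completed) trace of the left-hand
side is one of `(a.x + w) ‖ z` or of `(b.y + w) ‖ z`, and conversely. As neither alternative is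
stuck, the empty trace is completed on neither side. -/

variable {A : Type}

namespace Proc

theorem step_add_iff {p q r : Proc A} {c : A} :
    Step (add p q) c r ↔ Step p c r ∨ Step q c r := by
  constructor
  · rintro (_ | ⟨_, h⟩ | ⟨_, h⟩)
    exacts [Or.inl h, Or.inr h]
  · rintro (h | h)
    exacts [Step.addL _ h, Step.addR _ h]

theorem step_par_iff {p z r : Proc A} {c : A} :
    Step (par p z) c r ↔
      (∃ p', Step p c p' ∧ r = par p' z) ∨ ∃ z', Step z c z' ∧ r = par p z' := by
  constructor
  · rintro (_ | _ | _ | ⟨_, h⟩ | ⟨_, h⟩)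
    exacts [Or.inl ⟨_, h, rfl⟩, Or.inr ⟨_, h, rfl⟩]
  · rintro (⟨p', h, rfl⟩ | ⟨z', h, rfl⟩)
    exacts [Step.parL _ h, Step.parR _ h]

theorem stuck_add_iff {p q : Proc A} : stuck (add p q) ↔ stuck p ∧ stuck q := by
  simp only [stuck, step_add_iff, not_or, forall_and]

theorem stuck_par_iff {p z : Proc A} : stuck (par p z) ↔ stuck p ∧ stuck z := by
  constructor
  · intro h
    exact ⟨fun c p' hs => h c _ (Step.parL z hs), fun c z' hs => h c _ (Step.parR p hs)⟩
  · rintro ⟨hp, hz⟩ c r (_ | _ | _ | ⟨_, hs⟩ | ⟨_, hs⟩)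
    exacts [hp _ _ hs, hz _ _ hs]

end Proc

open Proc

theorem traceTo_nil_iff {p q : Proc A} : TraceTo p [] q ↔ q = p := by
  constructor
  · rintro ⟨⟩
    rfl
  · rintro rfl
    exact TraceTo.refl _

theorem traceTo_cons_iff {p q : Proc A} {c : A} {α : List A} :
    TraceTo p (c :: α) q ↔ ∃ p', Step p c p' ∧ TraceTo p' α q := by
  constructor
  · rintro ⟨⟩
    exact ⟨_, ‹_›, ‹_›⟩
  · rintro ⟨p', hs, ht⟩
    exact TraceTo.step hs ht

theorem nil_mem_traces (p : Proc A) : [] ∈ traces p :=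
  ⟨p, TraceTo.refl p⟩

theorem cons_mem_traces_iff {p : Proc A} {c : A} {α : List A} :
    c :: α ∈ traces p ↔ ∃ p', Step p c p' ∧ α ∈ traces p' := by
  simp only [traces, Set.mem_ofPred_eq, traceTo_cons_iff]
  exact ⟨fun ⟨q, p', hs, ht⟩ => ⟨p', hs, q, ht⟩, fun ⟨p', hs, q, ht⟩ => ⟨q, p', hs, ht⟩⟩

theorem nil_mem_ctraces_iff {p : Proc A} : [] ∈ ctraces p ↔ stuck p := by
  simp [ctraces, traceTo_nil_iff]

theorem cons_mem_ctraces_iff {p : Proc A} {c : A} {α : List A} :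
    c :: α ∈ ctraces p ↔ ∃ p', Step p c p' ∧ α ∈ ctraces p' := by
  simp only [ctraces, Set.mem_ofPred_eq, traceTo_cons_iff]
  exact ⟨fun ⟨q, ⟨p', hs, ht⟩, hq⟩ => ⟨p', hs, q, ht, hq⟩,
    fun ⟨p', hs, q, ht, hq⟩ => ⟨q, ⟨p', hs, ht⟩, hq⟩⟩

theorem cons_mem_par_iff (F : Proc A → Set (List A))
    (hF : ∀ r c α, c :: α ∈ F r ↔ ∃ r', Step r c r' ∧ α ∈ F r')
    {p z : Proc A} {c : A} {α : List A} :
    c :: α ∈ F (par p z) ↔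
      (∃ p', Step p c p' ∧ α ∈ F (par p' z)) ∨ ∃ z', Step z c z' ∧ α ∈ F (par p z') := by
  simp [hF, step_par_iff, or_and_right, exists_or]

/-- `F` is `traces` or `ctraces`: both unfold along the first transition. -/
theorem par_eq_union_of_step_iff (F : Proc A → Set (List A))
    (hF : ∀ r c α, c :: α ∈ F r ↔ ∃ r', Step r c r' ∧ α ∈ F r')
    {p q₁ q₂ : Proc A} (hstep : ∀ c r, Step p c r ↔ Step q₁ c r ∨ Step q₂ c r)
    (hnil : ∀ z, [] ∈ F (par p z) ↔ [] ∈ F (par q₁ z) ∨ [] ∈ F (par q₂ z)) (z : Proc A) :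
    F (par p z) = F (par q₁ z) ∪ F (par q₂ z) := by
  ext α
  induction α generalizing z with
  | nil => exact hnil z
  | cons c α ih =>
    simp only [Set.mem_union, cons_mem_par_iff F hF, hstep, ih, or_and_right, and_or_left,
      exists_or]
    exact or_or_or_comm

theorem traces_par_eq_union_of_step_iff {p q₁ q₂ : Proc A}
    (hstep : ∀ c r, Step p c r ↔ Step q₁ c r ∨ Step q₂ c r) (z : Proc A) :
    traces (par p z) = traces (par q₁ z) ∪ traces (par q₂ z) :=
  par_eq_union_of_step_iff traces (fun _ _ _ => cons_mem_traces_iff) hstep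
    (fun _ => iff_of_true (nil_mem_traces _) (Or.inl (nil_mem_traces _))) z

theorem ctraces_par_eq_union_of_step_iff {p q₁ q₂ : Proc A}
    (hstep : ∀ c r, Step p c r ↔ Step q₁ c r ∨ Step q₂ c r)
    (hq₁ : ¬ stuck q₁) (hq₂ : ¬ stuck q₂) (z : Proc A) :
    ctraces (par p z) = ctraces (par q₁ z) ∪ ctraces (par q₂ z) := by
  have hp : ¬ stuck p := fun h => hq₁ fun c r hs => h c r ((hstep c r).2 (Or.inl hs))
  refine par_eq_union_of_step_iff ctraces (fun _ _ _ => cons_mem_ctraces_iff) hstep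
    (fun z => ?_) z
  simp only [nil_mem_ctraces_iff, stuck_par_iff, hp, hq₁, hq₂, false_and, or_self]

theorem traces_add (p q : Proc A) : traces (add p q) = traces p ∪ traces q := by
  ext (_ | ⟨c, α⟩)
  · exact iff_of_true (nil_mem_traces _) (Or.inl (nil_mem_traces _))
  · simp only [Set.mem_union, cons_mem_traces_iff, step_add_iff, or_and_right, exists_or]

theorem ctraces_add {p q : Proc A} (hp : ¬ stuck p) (hq : ¬ stuck q) :
    ctraces (add p q) = ctraces p ∪ ctraces q := by
  ext (_ | ⟨c, α⟩)
  · simp only [Set.mem_union, nil_mem_ctraces_iff, stuck_add_iff, hp, hq, false_and, or_self]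
  · simp only [Set.mem_union, cons_mem_ctraces_iff, step_add_iff, or_and_right, exists_or]

theorem CTP_sound_general {A : Type}
    (a b : A) (x y w z : Proc A) :
    ctraces (Proc.par (Proc.add (Proc.add (Proc.pre a x) (Proc.pre b y)) w) z)
        = ctraces (Proc.add (Proc.par (Proc.add (Proc.pre a x) w) z)
                            (Proc.par (Proc.add (Proc.pre b y) w) z))
    ∧ traces (Proc.par (Proc.add (Proc.add (Proc.pre a x) (Proc.pre b y)) w) z)
        = traces (Proc.add (Proc.par (Proc.add (Proc.pre a x) w) z)
                           (Proc.par (Proc.add (Proc.pre b y) w) z)) := by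
  have hstep : ∀ c r, Step (add (add (pre a x) (pre b y)) w) c r ↔
      Step (add (pre a x) w) c r ∨ Step (add (pre b y) w) c r := by
    intro c r
    simp only [step_add_iff]
    exact or_or_distrib_right
  have ha : ¬ stuck (add (pre a x) w) := fun h => h a x (Step.addL _ (Step.pre a x))
  have hb : ¬ stuck (add (pre b y) w) := fun h => h b y (Step.addL _ (Step.pre b y))
  rw [ctraces_add (fun h => ha (stuck_par_iff.1 h).1) (fun h => hb (stuck_par_iff.1 h).1),
    traces_add]
  exact ⟨ctraces_par_eq_union_of_step_iff hstep ha hb z, traces_par_eq_union_of_step_iff hstep z⟩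

theorem CTP_sound {A : Type} [Fintype A] [Nonempty A]
    (a b : A) (x y w z : Proc A) :
    ctraces (Proc.par (Proc.add (Proc.add (Proc.pre a x) (Proc.pre b y)) w) z)
        = ctraces (Proc.add (Proc.par (Proc.add (Proc.pre a x) w) z)
                            (Proc.par (Proc.add (Proc.pre b y) w) z))
    ∧ traces (Proc.par (Proc.add (Proc.add (Proc.pre a x) (Proc.pre b y)) w) z)
        = traces (Proc.add (Proc.par (Proc.add (Proc.pre a x) w) z)
                           (Proc.par (Proc.add (Proc.pre b y) w) z)) :=
  CTP_sound_general a b x y w z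
end
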